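/- arXiv:1611.08066 — 4 statements merged into one kernel-verified Lean document; each statement's English description precedes it below -/
import Mathlib

section
/- Let G be a finite simple graph, let M be a proper clique module of G, and let u ∈ M. Let G' = G \ (M \ {u}) be the block of decomposition with respect to M. If G has no clique cutset, then G' has no clique cutset. -/
open SimpleGraph

/-- A graph has a clique cutset if there is a (possibly empty) clique `K` whose removal
disconnects the graph. -/
def HasCliqueCutset {V : Type*} (G : SimpleGraph V) : Prop :=
  ∃ K : Set V, G.IsClique K ∧ ¬ (G.induce Kᶜ).Preconnected

private lemma reach_map_aux {α β : Type*} {A : SimpleGraph α} {B : SimpleGraph β} (f : α → β)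
    (h : ∀ x y, A.Adj x y → B.Reachable (f x) (f y)) :
    ∀ {x y : α}, A.Reachable x y → B.Reachable (f x) (f y) := by
  intro x y hr
  obtain ⟨w⟩ := hr
  induction w with
  | nil => exact Reachable.refl _
  | cons hadj _ ih => exact (h _ _ hadj).trans ih

/-- If `M` is a proper clique module of `G`, `u ∈ M`, and `G` has no clique cutset, then the
block of decomposition `G' = G \ (M \ {u})` has no clique cutset. -/
theorem block_of_cliqueModule_no_cliqueCutset {V : Type*} [Fintype V]
    (G : SimpleGraph V) (M : Set V)
    (hM1 : 2 ≤ M.ncard) (hM2 : M.ncard ≤ Fintype.card V - 2)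
    (hMclique : G.IsClique M)
    (hMmodule : ∀ x ∉ M, (∀ y ∈ M, G.Adj x y) ∨ (∀ y ∈ M, ¬ G.Adj x y))
    (u : V) (hu : u ∈ M)
    (hG : ¬ HasCliqueCutset G) :
    ¬ HasCliqueCutset (G.induce (Mᶜ ∪ {u})) := by
  classical
  intro hbad
  obtain ⟨K', hK'clique, hK'nc⟩ := hbad
  rw [Preconnected] at hK'nc
  push_neg at hK'nc
  obtain ⟨a, b, hab⟩ := hK'nc
  have huMem : u ∈ (Mᶜ ∪ {u} : Set V) := Or.inr rfl
  set uE : ↥(Mᶜ ∪ {u} : Set V) := ⟨u, huMem⟩ with huE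
  -- clique in G from clique in G'
  have hK'cliqueG : G.IsClique (Subtype.val '' K') := by
    intro x hx y hy hxy
    obtain ⟨x', hx', rfl⟩ := hx
    obtain ⟨y', hy', rfl⟩ := hy
    have := hK'clique hx' hy' (fun h => hxy (congrArg Subtype.val h))
    exact this
  by_cases huK : uE ∈ K'
  · -- case u ∈ K': take K = K' ∪ M
    apply hG
    refine ⟨(Subtype.val '' K') ∪ M, ?_, ?_⟩
    · -- clique
      intro x hx y hy hxy
      have key : ∀ z, z ∈ Subtype.val '' K' → z ∉ M → ∀ m ∈ M, G.Adj z m := by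
        intro z hz hzM m hm
        obtain ⟨z', hz', rfl⟩ := hz
        have hzu : (z' : V) ≠ u := fun h => hzM (by rw [h]; exact hu)
        have hadj : G.Adj z' u := hK'clique hz' huK (fun h => hzu (congrArg Subtype.val h))
        rcases hMmodule z' hzM with h | h
        · exact h m hm
        · exact absurd hadj (h u hu)
      rcases hx with hx | hx <;> rcases hy with hy | hy
      · exact hK'cliqueG hx hy hxy
      · by_cases hxM : x ∈ M
        · exact hMclique hxM hy hxy
        · exact key x hx hxM y hy
      · by_cases hyM : y ∈ M
        · exact hMclique hx hyM hxy
        · exact (key y hy hyM x hx).symm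
      · exact hMclique hx hy hxy
    · -- not preconnected
      rw [Preconnected]
      push_neg
      have hmem : ∀ c : ↥K'ᶜ, (c : ↥(Mᶜ ∪ {u} : Set V)).val ∈ ((Subtype.val '' K') ∪ M)ᶜ := by
        intro c
        intro hc
        rcases hc with hc | hc
        · obtain ⟨c', hc', hcc⟩ := hc
          have : c' = (c : ↥(Mᶜ ∪ {u} : Set V)) := Subtype.ext hcc
          exact c.2 (this ▸ hc')
        · rcases (c : ↥(Mᶜ ∪ {u} : Set V)).2 with h | h
          · exact h hc
          · have : (c : ↥(Mᶜ ∪ {u} : Set V)) = uE := Subtype.ext h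
            exact c.2 (by rw [this]; exact huK)
      refine ⟨⟨_, hmem a⟩, ⟨_, hmem b⟩, ?_⟩
      intro hreach
      apply hab
      -- map back
      have := reach_map_aux
        (A := G.induce ((Subtype.val '' K') ∪ M)ᶜ)
        (B := (G.induce (Mᶜ ∪ {u})).induce K'ᶜ)
        (fun v => ⟨⟨v.1, Or.inl (fun h => v.2 (Or.inr h))⟩,
          fun h => v.2 (Or.inl ⟨_, h, rfl⟩)⟩)
        (fun x y hxy => Adj.reachable hxy) hreach
      convert this using 2 <;> exact Subtype.ext (Subtype.ext rfl)
  · -- case u ∉ K': take K = K'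
    apply hG
    refine ⟨Subtype.val '' K', hK'cliqueG, ?_⟩
    rw [Preconnected]
    push_neg
    have hKM : ∀ m ∈ M, m ∉ Subtype.val '' K' := by
      intro m hm hmem
      obtain ⟨m', hm', rfl⟩ := hmem
      rcases m'.2 with h | h
      · exact h hm
      · exact huK ((Subtype.ext h : m' = uE) ▸ hm')
    have hmem : ∀ c : ↥K'ᶜ, (c : ↥(Mᶜ ∪ {u} : Set V)).val ∈ (Subtype.val '' K')ᶜ := by
      intro c hc
      obtain ⟨c', hc', hcc⟩ := hc
      exact c.2 ((Subtype.ext hcc : c' = (c : ↥(Mᶜ ∪ {u} : Set V))) ▸ hc')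
    refine ⟨⟨_, hmem a⟩, ⟨_, hmem b⟩, ?_⟩
    intro hreach
    apply hab
    -- map: send M to u, others to themselves
    have huK' : (uE : ↥(Mᶜ ∪ {u} : Set V)) ∈ K'ᶜ := huK
    let f : ↥(Subtype.val '' K')ᶜ → ↥(K'ᶜ) := fun v =>
      if h : v.1 ∈ M then ⟨uE, huK'⟩
      else ⟨⟨v.1, Or.inl h⟩, fun hc => v.2 ⟨_, hc, rfl⟩⟩
    have hadjmap : ∀ x y, (G.induce (Subtype.val '' K')ᶜ).Adj x y →
        ((G.induce (Mᶜ ∪ {u})).induce K'ᶜ).Reachable (f x) (f y) := by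
      intro x y hxy
      have hGxy : G.Adj x.1 y.1 := hxy
      by_cases hxM : x.1 ∈ M <;> by_cases hyM : y.1 ∈ M
      · have hfeq : f x = f y := by simp only [f, dif_pos hxM, dif_pos hyM]
        rw [hfeq]
      · rcases hMmodule y.1 hyM with h | h
        · have : G.Adj u y.1 := (h u hu).symm
          have hadj : ((G.induce (Mᶜ ∪ {u})).induce K'ᶜ).Adj (f x) (f y) := by
            simp only [f, dif_pos hxM, dif_neg hyM]
            exact this
          exact hadj.reachable
        · exact absurd hGxy.symm (h x.1 hxM)
      · rcases hMmodule x.1 hxM with h | h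
        · have : G.Adj x.1 u := h u hu
          have hadj : ((G.induce (Mᶜ ∪ {u})).induce K'ᶜ).Adj (f x) (f y) := by
            simp only [f, dif_neg hxM, dif_pos hyM]
            exact this
          exact hadj.reachable
        · exact absurd hGxy (h y.1 hyM)
      · have hadj : ((G.induce (Mᶜ ∪ {u})).induce K'ᶜ).Adj (f x) (f y) := by
          simp only [f, dif_neg hxM, dif_neg hyM]
          exact hGxy
        exact hadj.reachable
    have hmap := reach_map_aux f hadjmap hreach
    have hfix : ∀ (c : ↥K'ᶜ), f ⟨_, hmem c⟩ = c := by
      intro c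
      by_cases hcM : (c : ↥(Mᶜ ∪ {u} : Set V)).val ∈ M
      · have hcu : (c : ↥(Mᶜ ∪ {u} : Set V)).val = u := by
          rcases (c : ↥(Mᶜ ∪ {u} : Set V)).2 with h | h
          · exact absurd hcM h
          · exact h
        simp only [f, dif_pos hcM]
        exact Subtype.ext (Subtype.ext hcu.symm)
      · simp only [f, dif_neg hcM]
    rwa [hfix a, hfix b] at hmap
end

section
/- Every connected chordal graph that is not a complete graph has a clique cutset. -/
/-!
Take two non-adjacent vertices `a`, `b`; removing all other vertices disconnects the graph, so
there is an inclusion-minimal cutset `S`. By minimality every `s ∈ S` has a neighbour in every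
component of `G - S`. If `x, y ∈ S` were non-adjacent, shortest `x`–`y` paths through two different
components of `G - S` would be chordless, and together they would form a chordless cycle of
length at least four, i.e. an induced cycle. Hence `S` is a clique.
-/

open SimpleGraph

namespace SimpleGraph

variable {V V' : Type*} {G : SimpleGraph V}

namespace Walk

theorem exists_adj_end_of_ne {u v : V} : ∀ (p : G.Walk u v), u ≠ v →
    ∃ x, G.Adj x v ∧ ∃ q : G.Walk u x, q.support ⊆ p.support ∧ v ∉ q.support
  | .nil, h => absurd rfl h
  | .cons (v := w) huw p, huv => by
    by_cases hwv : w = v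
    · subst hwv
      exact ⟨u, huw, .nil, by simp, by simpa using huv.symm⟩
    · obtain ⟨x, hxv, q, hsub, hv⟩ := exists_adj_end_of_ne p hwv
      exact ⟨x, hxv, .cons huw q, by simpa using List.cons_subset_cons _ hsub,
        by simp [huv.symm, hv]⟩

theorem two_le_length_of_not_adj {u v : V} : ∀ (p : G.Walk u v), u ≠ v → ¬ G.Adj u v →
    2 ≤ p.length
  | .nil, huv, _ => absurd rfl huv
  | .cons h .nil, _, hadj => absurd h hadj
  | .cons _ (.cons _ _), _, _ => by simp

theorem IsPath.start_notMem_support_tail {u v : V} {p : G.Walk u v} (hp : p.IsPath) :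
    u ∉ p.support.tail := by
  have := hp.support_nodup
  rw [← p.cons_tail_support, List.nodup_cons] at this
  exact this.1

theorem isChordless_of_length_eq_dist {u v : V} {p : G.Walk u v}
    (hp : p.length = G.dist u v) : p.IsChordless := by
  rw [isChordless_iff_forall_mem_edges]
  intro a b ha hb hab
  obtain ⟨i, rfl, hi⟩ := mem_support_iff_exists_getVert.mp ha
  obtain ⟨j, rfl, hj⟩ := mem_support_iff_exists_getVert.mp hb
  clear ha hb
  wlog hij : i < j generalizing i j
  · rw [Sym2.eq_swap]
    have hne : i ≠ j := by rintro rfl; exact hab.ne rfl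
    exact this j hj i hi hab.symm (by omega)
  obtain rfl | hji := eq_or_ne j (i + 1)
  · exact (mk_mem_edges_iff_exists p).mpr ⟨i, by omega, rfl⟩
  · have := dist_le ((p.take i).append (cons hab (p.drop j)))
    simp only [length_append, take_length, length_cons, drop_length] at this
    omega

theorem IsChordless.map_embedding {G' : SimpleGraph V'} {u v : V} {p : G.Walk u v}
    (hp : p.IsChordless) (f : G ↪g G') : (p.map f.toHom).IsChordless := by
  rw [isChordless_iff_forall_mem_edges] at hp ⊢
  intro a b ha hb hab
  simp only [support_map, List.mem_map] at ha hb
  obtain ⟨a, ha, rfl⟩ := ha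
  obtain ⟨b, hb, rfl⟩ := hb
  rw [edges_map]
  exact List.mem_map_of_mem (f := Sym2.map f.toHom) (hp ha hb (f.map_adj_iff.mp hab))

theorem IsChordless.append {u v w : V} {p : G.Walk u v} {q : G.Walk v w}
    (hp : p.IsChordless) (hq : q.IsChordless)
    (h : ∀ a ∈ p.support, ∀ b ∈ q.support, G.Adj a b → a ∈ q.support ∨ b ∈ p.support) :
    (p.append q).IsChordless := by
  rw [isChordless_iff_forall_mem_edges] at hp hq ⊢
  intro a b ha hb hab
  rw [mem_support_append_iff] at ha hb
  rw [edges_append, List.mem_append]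
  rcases ha with ha | ha <;> rcases hb with hb | hb
  · exact .inl (hp ha hb hab)
  · rcases h a ha b hb hab with ha' | hb'
    · exact .inr (hq ha' hb hab)
    · exact .inl (hp ha hb' hab)
  · rcases h b hb a ha hab.symm with hb' | ha'
    · exact .inr (hq ha hb' hab)
    · exact .inl (hp ha' hb hab)
  · exact .inr (hq ha hb hab)

theorem IsCycle.nonempty_cycleGraph_embedding {v : V} {p : G.Walk v v} (hp : p.IsCycle)
    (hc : p.IsChordless) : Nonempty (cycleGraph p.length ↪g G) := by
  have hlen := hp.three_le_length
  set n := p.length with hn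
  have : NeZero n := ⟨by omega⟩
  have hone : ((1 : Fin n) : ℕ) = 1 := Fin.val_one' .. |>.trans (Nat.mod_eq_of_lt (by omega))
  have hsucc (i : Fin n) : p.getVert ↑(i + 1) = p.getVert (↑i + 1) := by
    rw [Fin.val_add, hone]
    rcases Nat.lt_or_ge (i + 1) n with h | h
    · rw [Nat.mod_eq_of_lt h]
    · rw [show (i : ℕ) + 1 = n by omega, Nat.mod_self, getVert_zero, hn, getVert_length]
  have hinj : Function.Injective fun i : Fin n => p.getVert i := fun i j hij =>
    Fin.ext (hp.getVert_injOn' (by simp; omega) (by simp; omega) hij)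
  have hadj (i j : Fin n) : (cycleGraph n).Adj i j ↔ j = i + 1 ∨ i = j + 1 := by
    rw [cycleGraph_adj', ← hone, ← Fin.ext_iff, ← Fin.ext_iff, sub_eq_iff_eq_add,
      sub_eq_iff_eq_add, add_comm (1 : Fin n), add_comm (1 : Fin n), or_comm]
  refine ⟨⟨⟨fun i => p.getVert i, hinj⟩, fun {i j} => ?_⟩⟩
  simp only [hadj]
  constructor
  · intro h
    obtain ⟨k, hk, he⟩ := (mk_mem_edges_iff_exists p).mp (hc.mem_edges
      (p.getVert_mem_support i) (p.getVert_mem_support j) h)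
    rw [← Fin.val_mk hk, ← hsucc, Sym2.eq_iff] at he
    rcases he with ⟨hi, hj⟩ | ⟨hj, hi⟩
    · exact .inl ((hinj hj).symm.trans (congrArg (· + 1) (hinj hi)))
    · exact .inr ((hinj hi).symm.trans (congrArg (· + 1) (hinj hj)))
  · rintro (rfl | rfl)
    · show G.Adj (p.getVert i) (p.getVert ↑(i + 1))
      exact hsucc i ▸ p.adj_getVert_succ i.isLt
    · show G.Adj (p.getVert ↑(j + 1)) (p.getVert j)
      exact (hsucc j ▸ p.adj_getVert_succ j.isLt).symm

theorem exists_support_eq_map_val {s : Set V} {u v : s} (p : (G.induce s).Walk u v) :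
    ∃ q : G.Walk u v, q.support = p.support.map Subtype.val :=
  ⟨p.map (Embedding.induce s).toHom, p.support_map _⟩

theorem exists_isPath_isChordless_of_support_subset {s : Set V} {u v : V} (p : G.Walk u v)
    (hp : ∀ z ∈ p.support, z ∈ s) :
    ∃ q : G.Walk u v, q.IsPath ∧ q.IsChordless ∧ ∀ z ∈ q.support, z ∈ s := by
  obtain ⟨r, hr⟩ := (p.induce s hp).reachable.exists_walk_length_eq_dist
  refine ⟨r.map (Embedding.induce s).toHom, (r.isPath_of_length_eq_dist hr).map
    Subtype.val_injective, (isChordless_of_length_eq_dist hr).map_embedding _, fun z hz => ?_⟩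
  obtain ⟨w, -, rfl⟩ := List.mem_map.mp (support_map _ r ▸ hz)
  exact w.2

end Walk

theorem reachable_induce_iff {s : Set V} {u v : s} :
    (G.induce s).Reachable u v ↔ ∃ p : G.Walk u v, ∀ z ∈ p.support, z ∈ s := by
  refine ⟨fun ⟨p⟩ => ?_, fun ⟨p, hp⟩ => ⟨p.induce s hp⟩⟩
  obtain ⟨q, hq⟩ := p.exists_support_eq_map_val
  refine ⟨q, fun z hz => ?_⟩
  obtain ⟨w, -, rfl⟩ := List.mem_map.mp (hq ▸ hz)
  exact w.2

theorem not_preconnected_induce_pair {a b : V} (hab : a ≠ b) (hnadj : ¬ G.Adj a b) :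
    ¬ (G.induce {a, b}).Preconnected := fun h => by
  obtain ⟨p, hp⟩ := reachable_induce_iff.mp (h ⟨a, .inl rfl⟩ ⟨b, .inr rfl⟩)
  obtain ⟨x, hxb, q, hqp, hbq⟩ := p.exists_adj_end_of_ne hab
  rcases hp x (hqp q.end_mem_support) with rfl | rfl
  · exact hnadj hxb
  · exact hbq q.end_mem_support

namespace ConnectedComponent

variable {s : Set V}

theorem not_adj_of_ne {C D : (G.induce s).ConnectedComponent} (hCD : C ≠ D) {u v : s}
    (hu : u ∈ C.supp) (hv : v ∈ D.supp) : ¬ G.Adj u v := fun h =>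
  hCD (hu ▸ hv ▸ connectedComponentMk_eq_of_adj (by simpa using h))

theorem exists_isPath_isChordless (C : (G.induce s).ConnectedComponent) {x y : V} {u v : s}
    (hu : u ∈ C.supp) (hv : v ∈ C.supp) (hxu : G.Adj x u) (hyv : G.Adj y v) :
    ∃ P : G.Walk x y, P.IsPath ∧ P.IsChordless ∧
      ∀ z ∈ P.support, z = x ∨ z = y ∨ z ∈ Subtype.val '' C.supp := by
  classical
  obtain ⟨r⟩ := ConnectedComponent.exact (hu.trans hv.symm)
  have hr : ∀ z ∈ r.support, z ∈ C.supp := fun z hz =>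
    (ConnectedComponent.sound (r.takeUntil z hz).reachable).symm.trans hu
  obtain ⟨r', hr'⟩ := r.exists_support_eq_map_val
  refine (Walk.cons hxu (r'.concat hyv.symm))
    |>.exists_isPath_isChordless_of_support_subset
      (s := {z | z = x ∨ z = y ∨ z ∈ Subtype.val '' C.supp}) fun z hz => ?_
  simp only [Walk.support_cons, Walk.support_concat, hr', List.mem_cons, List.mem_append,
    List.not_mem_nil, or_false] at hz
  rcases hz with rfl | hz | rfl
  · exact .inl rfl
  · obtain ⟨w, hw, rfl⟩ := List.mem_map.mp hz
    exact .inr (.inr ⟨w, hr w hw, rfl⟩)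
  · exact .inr (.inl rfl)

end ConnectedComponent

section ThroughTwoComponents

variable {s : Set V} {C D : (G.induce s).ConnectedComponent} {x y : V} {p : G.Walk x y}
  {q : G.Walk y x}

theorem Walk.IsPath.isCycle_append_of_mem_supp (hCD : C ≠ D) (hp : p.IsPath) (hq : q.IsPath)
    (hlen : 2 ≤ p.length) (hps : ∀ z ∈ p.support, z = x ∨ z = y ∨ z ∈ Subtype.val '' C.supp)
    (hqs : ∀ z ∈ q.support, z = y ∨ z = x ∨ z ∈ Subtype.val '' D.supp) :
    (p.append q).IsCycle := by
  refine hp.isCycle_append hq (List.disjoint_left.mpr fun z hzp hzq => ?_) (.inl hlen)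
  have hzx : z ≠ x := fun h => hp.start_notMem_support_tail (h ▸ hzp)
  have hzy : z ≠ y := fun h => hq.start_notMem_support_tail (h ▸ hzq)
  obtain ⟨a, ha, rfl⟩ := ((hps z (List.mem_of_mem_tail hzp)).resolve_left hzx).resolve_left hzy
  obtain ⟨b, hb, hab⟩ := ((hqs _ (List.mem_of_mem_tail hzq)).resolve_left hzy).resolve_left hzx
  exact hCD (ha.symm.trans (Subtype.ext hab ▸ hb))

theorem Walk.IsChordless.append_of_mem_supp (hCD : C ≠ D) (hp : p.IsChordless)
    (hq : q.IsChordless) (hps : ∀ z ∈ p.support, z = x ∨ z = y ∨ z ∈ Subtype.val '' C.supp)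
    (hqs : ∀ z ∈ q.support, z = y ∨ z = x ∨ z ∈ Subtype.val '' D.supp) :
    (p.append q).IsChordless := by
  refine hp.append hq fun a ha b hb hab => ?_
  rcases hps a ha with rfl | rfl | ⟨a, ha', rfl⟩
  · exact .inl q.end_mem_support
  · exact .inl q.start_mem_support
  rcases hqs b hb with rfl | rfl | ⟨b, hb', rfl⟩
  · exact .inr p.end_mem_support
  · exact .inr p.start_mem_support
  exact (ConnectedComponent.not_adj_of_ne hCD ha' hb' hab).elim

end ThroughTwoComponents

section MinimalCutset

variable {S : Set V}

theorem exists_adj_mem_supp_of_minimal_cutset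
    (hS : Minimal (fun S : Set V => ¬ (G.induce Sᶜ).Preconnected) S) {s : V} (hs : s ∈ S)
    (C : (G.induce Sᶜ).ConnectedComponent) : ∃ u ∈ C.supp, G.Adj s u := by
  obtain ⟨c, rfl⟩ := C.exists_rep
  have hsc : (G.induce (S \ {s})ᶜ).Preconnected := by
    simpa using hS.not_prop_of_ssubset (Set.sdiff_singleton_ssubset.mpr hs)
  obtain ⟨p, hp⟩ := reachable_induce_iff.mp (hsc ⟨c, fun h => c.2 h.1⟩ ⟨s, fun h => h.2 rfl⟩)
  obtain ⟨x, hxs, q, hqp, hsq⟩ := p.exists_adj_end_of_ne fun h => c.2 (h ▸ hs)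
  have hqS : ∀ z ∈ q.support, z ∈ Sᶜ := fun z hz hzS =>
    hp z (hqp hz) ⟨hzS, fun h => hsq (Set.mem_singleton_iff.mp h ▸ hz)⟩
  refine ⟨⟨x, hqS x q.end_mem_support⟩, ?_, hxs.symm⟩
  exact ConnectedComponent.mem_supp_iff _ _ |>.mpr
    (ConnectedComponent.sound (reachable_induce_iff.mpr ⟨q, hqS⟩)).symm

theorem isClique_of_minimal_cutset (hchordal : ∀ n, 4 ≤ n → IsEmpty (cycleGraph n ↪g G))
    (hS : Minimal (fun S : Set V => ¬ (G.induce Sᶜ).Preconnected) S) : G.IsClique S := by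
  obtain ⟨a, b, hab⟩ : ∃ a b, ¬ (G.induce Sᶜ).Reachable a b := by
    simpa [Preconnected] using hS.prop
  have hCD : (G.induce Sᶜ).connectedComponentMk a ≠ (G.induce Sᶜ).connectedComponentMk b :=
    fun h => hab (ConnectedComponent.exact h)
  intro x hx y hy hxy
  by_contra hnadj
  have path_through (C : (G.induce Sᶜ).ConnectedComponent) {x y : V} (hx : x ∈ S) (hy : y ∈ S) :
      ∃ P : G.Walk x y, P.IsPath ∧ P.IsChordless ∧
        ∀ z ∈ P.support, z = x ∨ z = y ∨ z ∈ Subtype.val '' C.supp := by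
    obtain ⟨u, hu, hxu⟩ := exists_adj_mem_supp_of_minimal_cutset hS hx C
    obtain ⟨v, hv, hyv⟩ := exists_adj_mem_supp_of_minimal_cutset hS hy C
    exact C.exists_isPath_isChordless hu hv hxu hyv
  obtain ⟨P, hP, hPc, hPs⟩ := path_through _ hx hy
  obtain ⟨Q, hQ, hQc, hQs⟩ := path_through _ hy hx
  have hPlen := P.two_le_length_of_not_adj hxy hnadj
  have hQlen := Q.two_le_length_of_not_adj hxy.symm fun h => hnadj h.symm
  have hcycle := hP.isCycle_append_of_mem_supp hCD hQ hPlen hPs hQs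
  obtain ⟨e⟩ := hcycle.nonempty_cycleGraph_embedding (hPc.append_of_mem_supp hCD hQc hPs hQs)
  exact (hchordal _ (by rw [Walk.length_append]; omega)).false e

end MinimalCutset

end SimpleGraph

theorem chordal_not_complete_hasCliqueCutset_general {V : Type*} [Fintype V]
    (G : SimpleGraph V)
    (hchordal : ∀ n, 4 ≤ n → IsEmpty (cycleGraph n ↪g G))
    (hnc : G ≠ ⊤) :
    HasCliqueCutset G := by
  obtain ⟨a, b, hab, hnadj⟩ := ne_top_iff_exists_not_adj.mp hnc
  have hcut : ¬ (G.induce ({a, b}ᶜ : Set V)ᶜ).Preconnected := by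
    rw [compl_compl]
    exact not_preconnected_induce_pair hab hnadj
  obtain ⟨S, hS⟩ := exists_minimal_of_wellFoundedLT
    (fun S : Set V => ¬ (G.induce Sᶜ).Preconnected) ⟨_, hcut⟩
  exact ⟨S, isClique_of_minimal_cutset hchordal hS, hS.prop⟩

/-- Every connected chordal graph (no induced cycle of length at least 4) that is not
complete has a clique cutset. -/
theorem chordal_not_complete_hasCliqueCutset {V : Type*} [Fintype V]
    (G : SimpleGraph V) (hconn : G.Connected)
    (hchordal : ∀ n, 4 ≤ n → IsEmpty (cycleGraph n ↪g G))
    (hnc : G ≠ ⊤) :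
    HasCliqueCutset G :=
  chordal_not_complete_hasCliqueCutset_general G hchordal hnc
end

section
/- Let G be a graph obtained from a graph F by blowing up each vertex v ∈ V(F) into a nonempty clique K_v. Let u₁, u, v, v₁ be an induced path of F such that u and v both have degree exactly 2 in F. If |K_u| ≤ ω(G)/2, then the degree of any vertex of K_v in G equals |K_u| + |K_v| − 1 + |K_{v₁}|, which is at most (3/2)·ω(G) − 1. -/
open SimpleGraph

/-- The graph obtained from `F` by blowing up each vertex `v` into a clique `K_v` of size
`k v`: the cliques are pairwise complete or anticomplete according to adjacency in `F`. -/
def blowup {α : Type*} (F : SimpleGraph α) (k : α → ℕ) : SimpleGraph (Σ v, Fin (k v)) where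
  Adj a b := (a.1 = b.1 ∧ a ≠ b) ∨ F.Adj a.1 b.1
  symm := by
    constructor
    rintro a b (⟨h1, h2⟩ | h)
    · exact Or.inl ⟨h1.symm, h2.symm⟩
    · exact Or.inr h.symm
  loopless := by
    constructor
    rintro a (⟨-, h⟩ | h)
    · exact h rfl
    · exact F.loopless.irrefl _ h

/-! The neighbourhood of a vertex `x ∈ K_v` is `(K_v - x) ∪ ⋃_{w ∼ v} K_w`; since `v` has
exactly the two neighbours `u` and `v₁`, this gives the degree formula. The bound follows from
`|K_u| ≤ ω / 2` and `|K_v| + |K_{v₁}| ≤ ω`, because `K_v ∪ K_{v₁}` is a clique. -/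

section Blowup

variable {α : Type*}

/-- The vertex set `⋃_{w ∈ s} K_w` of the blow-up. -/
def blowupCliques (k : α → ℕ) (s : Finset α) : Finset (Σ v, Fin (k v)) :=
  s.sigma fun _ => Finset.univ

@[simp]
lemma mem_blowupCliques {k : α → ℕ} {s : Finset α} {x : Σ v, Fin (k v)} :
    x ∈ blowupCliques k s ↔ x.1 ∈ s := by
  simp [blowupCliques]

lemma card_blowupCliques {k : α → ℕ} (s : Finset α) :
    (blowupCliques k s).card = ∑ w ∈ s, k w := by
  simp [blowupCliques, Finset.card_sigma]

variable (F : SimpleGraph α) (k : α → ℕ)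

lemma add_le_cliqueNum_blowup [Finite α] {a b : α} (hab : F.Adj a b) :
    k a + k b ≤ (blowup F k).cliqueNum := by
  classical
  have hclique : (blowup F k).IsClique (blowupCliques k {a, b} : Set (Σ v, Fin (k v))) := by
    intro x hx y hy hxy
    simp only [Finset.mem_coe, mem_blowupCliques, Finset.mem_insert,
      Finset.mem_singleton] at hx hy
    by_cases hxy1 : x.1 = y.1
    · exact Or.inl ⟨hxy1, hxy⟩
    · right
      rcases hx with hx | hx <;> rcases hy with hy | hy <;> simp_all [F.adj_symm hab]
  simpa [card_blowupCliques, Finset.sum_pair hab.ne] using hclique.card_le_cliqueNum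

lemma ncard_neighborSet_blowup {v : α} {s : Finset α} (hs : ∀ w, F.Adj v w ↔ w ∈ s)
    (i : Fin (k v)) :
    ((blowup F k).neighborSet ⟨v, i⟩).ncard = k v - 1 + ∑ w ∈ s, k w := by
  classical
  have hvs : v ∉ s := fun h => F.loopless.irrefl v ((hs v).2 h)
  have hN : (blowup F k).neighborSet ⟨v, i⟩ =
      ↑((blowupCliques k {v}).erase ⟨v, i⟩ ∪ blowupCliques k s) := by
    ext ⟨w, j⟩
    simp [blowup, hs, eq_comm]
  rw [hN, Set.ncard_coe_finset, Finset.card_union_of_disjoint, Finset.card_erase_of_mem (by simp),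
    card_blowupCliques, card_blowupCliques, Finset.sum_singleton]
  rw [Finset.disjoint_left]
  intro x hx hxs
  have hxv : x.1 = v := Finset.mem_singleton.1 (mem_blowupCliques.1 (Finset.mem_of_mem_erase hx))
  exact hvs (hxv ▸ mem_blowupCliques.1 hxs)

lemma neighborSet_eq_pair_of_ncard_eq_two {v u w : α} (hu : F.Adj v u) (hw : F.Adj v w)
    (huw : u ≠ w) (hv : (F.neighborSet v).ncard = 2) : F.neighborSet v = {u, w} :=
  (Set.eq_of_subset_of_ncard_le (t := F.neighborSet v) (Set.pair_subset hu hw)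
    (by rw [hv, Set.ncard_pair huw]) (Set.finite_of_ncard_pos (by omega))).symm

end Blowup

theorem blowup_degree_claim_general {α : Type*} [Fintype α] (F : SimpleGraph α) (k : α → ℕ)
    (u v v₁ : α)
    (hd5 : u ≠ v₁)
    (ha2 : F.Adj u v) (ha3 : F.Adj v v₁)
    (hdegv : (F.neighborSet v).ncard = 2)
    (hku : 2 * k u ≤ (blowup F k).cliqueNum) :
    ∀ i : Fin (k v),
      ((blowup F k).neighborSet ⟨v, i⟩).ncard = k u + k v - 1 + k v₁ ∧
      (((blowup F k).neighborSet ⟨v, i⟩).ncard : ℝ) ≤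
        3 / 2 * (blowup F k).cliqueNum - 1 := by
  classical
  intro i
  have hNv := neighborSet_eq_pair_of_ncard_eq_two F ha2.symm ha3 hd5 hdegv
  have hdeg : ((blowup F k).neighborSet ⟨v, i⟩).ncard = k v - 1 + (k u + k v₁) := by
    rw [ncard_neighborSet_blowup F k (s := {u, v₁}) (by simp [← mem_neighborSet, hNv]) i,
      Finset.sum_pair hd5]
  have hkv : 1 ≤ k v := Fin.pos i
  have hvv₁ := add_le_cliqueNum_blowup F k ha3
  refine ⟨by omega, ?_⟩
  have hbound : 2 * ((blowup F k).neighborSet ⟨v, i⟩).ncard + 2 ≤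
      3 * (blowup F k).cliqueNum := by
    omega
  have hbound_real : (2 * ((blowup F k).neighborSet ⟨v, i⟩).ncard + 2 : ℝ) ≤
      3 * (blowup F k).cliqueNum := by
    exact_mod_cast hbound
  linarith

/-- Key Claim in the degree-bound proof: if `u₁, u, v, v₁` is an induced path of `F` with
`u` and `v` of degree exactly 2 in `F`, and `|K_u| ≤ ω(G)/2` where `G` is the blow-up of
`F` by nonempty cliques, then every vertex of `K_v` has degree exactly
`|K_u| + |K_v| − 1 + |K_{v₁}|` in `G`, which is at most `(3/2)·ω(G) − 1`. -/
theorem blowup_degree_claim {α : Type*} [Fintype α] (F : SimpleGraph α) (k : α → ℕ)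
    (hk : ∀ w, 1 ≤ k w)
    (u₁ u v v₁ : α)
    (hd1 : u₁ ≠ u) (hd2 : u₁ ≠ v) (hd3 : u₁ ≠ v₁) (hd4 : u ≠ v) (hd5 : u ≠ v₁)
    (hd6 : v ≠ v₁)
    (ha1 : F.Adj u₁ u) (ha2 : F.Adj u v) (ha3 : F.Adj v v₁)
    (hn1 : ¬ F.Adj u₁ v) (hn2 : ¬ F.Adj u v₁) (hn3 : ¬ F.Adj u₁ v₁)
    (hdegu : (F.neighborSet u).ncard = 2) (hdegv : (F.neighborSet v).ncard = 2)
    (hku : 2 * k u ≤ (blowup F k).cliqueNum) :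
    ∀ i : Fin (k v),
      ((blowup F k).neighborSet ⟨v, i⟩).ncard = k u + k v - 1 + k v₁ ∧
      (((blowup F k).neighborSet ⟨v, i⟩).ncard : ℝ) ≤
        3 / 2 * (blowup F k).cliqueNum - 1 :=
  blowup_degree_claim_general F k u v v₁ hd5 ha2 ha3 hdegv hku
end

section
/- Let G be a graph decomposed via a clique cutset S into A and B (i.e., V(G) = V(A) ∪ V(B), V(A) ∩ V(B) = S, S is a clique, and there are no edges between V(A)\S and V(B)\S). Let w : V(G) → ℝ be a weight function. Define w'(v) = w(v) + α_w(A \ N[v]) − α_w(A \ S) for v ∈ S, and w'(v) = w(v) for v ∈ V(B)\S, where α_w(H) denotes the maximum weight of a stable set in H. Then α_w(G) = α_w(A \ S) + α_{w'}(B). -/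
open SimpleGraph

/-- `stabw G w T` is `α_w(G[T])`: the maximum weight of a stable (independent) set of `G`
contained in `T`. -/
noncomputable def stabw {V : Type*} (G : SimpleGraph V) (w : V → ℝ) (T : Set V) : ℝ :=
  sSup {x | ∃ I : Finset V, ↑I ⊆ T ∧ (↑I : Set V).Pairwise (fun a b => ¬ G.Adj a b) ∧
    x = ∑ v ∈ I, w v}

lemma stabw_finite {V : Type*} [Fintype V] (G : SimpleGraph V) (w : V → ℝ) (T : Set V) :
    {x | ∃ I : Finset V, ↑I ⊆ T ∧ (↑I : Set V).Pairwise (fun a b => ¬ G.Adj a b) ∧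
      x = ∑ v ∈ I, w v}.Finite := by
  apply Set.Finite.subset (Set.finite_range (fun I : Finset V => ∑ v ∈ I, w v))
  rintro x ⟨I, -, -, rfl⟩
  exact ⟨I, rfl⟩

lemma le_stabw {V : Type*} [Fintype V] (G : SimpleGraph V) (w : V → ℝ) (T : Set V)
    (I : Finset V) (hI : ↑I ⊆ T) (hst : (↑I : Set V).Pairwise (fun a b => ¬ G.Adj a b)) :
    ∑ v ∈ I, w v ≤ stabw G w T :=
  le_csSup (stabw_finite G w T).bddAbove ⟨I, hI, hst, rfl⟩

lemma exists_stabw {V : Type*} [Fintype V] (G : SimpleGraph V) (w : V → ℝ) (T : Set V) :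
    ∃ I : Finset V, ↑I ⊆ T ∧ (↑I : Set V).Pairwise (fun a b => ¬ G.Adj a b) ∧
      stabw G w T = ∑ v ∈ I, w v := by
  have hne : {x | ∃ I : Finset V, ↑I ⊆ T ∧ (↑I : Set V).Pairwise (fun a b => ¬ G.Adj a b) ∧
      x = ∑ v ∈ I, w v}.Nonempty := ⟨0, ∅, by simp, by simp, by simp⟩
  exact hne.csSup_mem (stabw_finite G w T)


/-- Tarjan's reweighting lemma for clique cutset decompositions. If `G` is decomposed via
a clique cutset `S` into `A` and `B`, and the weight of each `v ∈ S` is redefined as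
`w'(v) = w(v) + α_w(A \ N[v]) − α_w(A \ S)`, then `α_w(G) = α_w(A \ S) + α_{w'}(B)`. -/
theorem tarjan_reweighting {V : Type*} [Fintype V] (G : SimpleGraph V)
    (A B S : Set V)
    (hcover : A ∪ B = Set.univ) (hinter : A ∩ B = S) (hSclique : G.IsClique S)
    (hcross : ∀ a ∈ A \ S, ∀ b ∈ B \ S, ¬ G.Adj a b)
    (w w' : V → ℝ)
    (hw'S : ∀ v ∈ S,
      w' v = w v + stabw G w (A \ insert v (G.neighborSet v)) - stabw G w (A \ S))
    (hw'B : ∀ v ∈ B \ S, w' v = w v) :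
    stabw G w Set.univ = stabw G w (A \ S) + stabw G w' B := by
  classical
  have hSA : S ⊆ A := by rw [← hinter]; exact Set.inter_subset_left
  have hSB : S ⊆ B := by rw [← hinter]; exact Set.inter_subset_right
  have hABS : ∀ v, v ∈ A → v ∈ B → v ∈ S := fun v ha hb => hinter ▸ ⟨ha, hb⟩
  have hcov : ∀ v : V, v ∈ A ∨ v ∈ B := by
    intro v
    have : v ∈ A ∪ B := hcover ▸ Set.mem_univ v
    exact this
  apply le_antisymm
  · -- upper bound
    obtain ⟨I, hIT, hIst, hIsum⟩ := exists_stabw G w Set.univ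
    rw [hIsum]
    set IA := I.filter (fun v => v ∈ A \ S) with hIAdef
    set IB := I.filter (fun v => v ∈ B) with hIBdef
    have hIAsub : (↑IA : Set V) ⊆ A \ S := by
      intro a ha
      simp only [hIAdef, Finset.coe_filter, Set.mem_setOf_eq] at ha
      exact ha.2
    have hIBsub : (↑IB : Set V) ⊆ B := by
      intro a ha
      simp only [hIBdef, Finset.coe_filter, Set.mem_setOf_eq] at ha
      exact ha.2
    have hIAst : (↑IA : Set V).Pairwise (fun a b => ¬ G.Adj a b) :=
      hIst.mono (Finset.coe_subset.2 (Finset.filter_subset _ _))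
    have hIBst : (↑IB : Set V).Pairwise (fun a b => ¬ G.Adj a b) :=
      hIst.mono (Finset.coe_subset.2 (Finset.filter_subset _ _))
    have hsplit : ∑ v ∈ I, w v = ∑ v ∈ IA, w v + ∑ v ∈ IB, w v := by
      rw [hIAdef, hIBdef, ← Finset.sum_filter_add_sum_filter_not I (fun v => v ∈ A \ S)]
      congr 1
      apply Finset.sum_congr _ (fun _ _ => rfl)
      apply Finset.filter_congr
      intro v _
      constructor
      · intro h
        rcases hcov v with ha | hb
        · by_cases hs : v ∈ S
          · exact hSB hs
          · exact absurd ⟨ha, hs⟩ h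
        · exact hb
      · rintro hb ⟨ha, hs⟩
        exact hs (hABS v ha hb)
    rw [hsplit]
    by_cases hc : ∃ v ∈ I, v ∈ S
    · obtain ⟨v, hvI, hvS⟩ := hc
      have hvonly : ∀ a ∈ I, a ∈ S → a = v := by
        intro a ha has
        by_contra hne
        exact hIst (Finset.mem_coe.2 ha) (Finset.mem_coe.2 hvI) hne (hSclique has hvS hne)
      -- IA ⊆ A \ N[v]
      have hIAsub' : (↑IA : Set V) ⊆ A \ insert v (G.neighborSet v) := by
        intro a ha
        have haI : a ∈ I := Finset.filter_subset _ _ (Finset.mem_coe.1 ha)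
        have haAS := hIAsub ha
        refine ⟨haAS.1, ?_⟩
        intro hmem
        rcases Set.mem_insert_iff.1 hmem with rfl | hadj
        · exact haAS.2 hvS
        · have hne : v ≠ a := by rintro rfl; exact haAS.2 hvS
          exact hIst (Finset.mem_coe.2 hvI) (Finset.mem_coe.2 haI) hne hadj
      have h1 : ∑ x ∈ IA, w x ≤ stabw G w (A \ insert v (G.neighborSet v)) :=
        le_stabw G w _ IA hIAsub' hIAst
      have hvB : v ∈ IB := by
        rw [hIBdef, Finset.mem_filter]
        exact ⟨hvI, hSB hvS⟩
      have herase : ∀ a ∈ IB.erase v, w' a = w a := by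
        intro a ha
        have ha' := Finset.mem_of_mem_erase ha
        have hane : a ≠ v := Finset.ne_of_mem_erase ha
        rw [hIBdef, Finset.mem_filter] at ha'
        have has : a ∉ S := fun h => hane (hvonly a ha'.1 h)
        exact hw'B a ⟨ha'.2, has⟩
      have hsum' : ∑ x ∈ IB, w' x
          = w' v + ∑ x ∈ IB.erase v, w x := by
        rw [← Finset.add_sum_erase _ w' hvB]
        congr 1
        exact Finset.sum_congr rfl herase
      have hsum'' : ∑ x ∈ IB, w x = w v + ∑ x ∈ IB.erase v, w x := by
        rw [← Finset.add_sum_erase _ w hvB]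
      have h2 : ∑ x ∈ IB, w' x ≤ stabw G w' B := le_stabw G w' B IB hIBsub hIBst
      have hwv := hw'S v hvS
      rw [hwv] at hsum'
      linarith
    · push_neg at hc
      have hIAsub2 : (↑IA : Set V) ⊆ A \ S := hIAsub
      have h1 : ∑ x ∈ IA, w x ≤ stabw G w (A \ S) := le_stabw G w _ IA hIAsub2 hIAst
      have heq : ∑ x ∈ IB, w x = ∑ x ∈ IB, w' x := by
        apply Finset.sum_congr rfl
        intro a ha
        rw [hIBdef, Finset.mem_filter] at ha
        exact (hw'B a ⟨ha.2, hc a ha.1⟩).symm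
      have h2 : ∑ x ∈ IB, w' x ≤ stabw G w' B := le_stabw G w' B IB hIBsub hIBst
      linarith
  · -- lower bound
    obtain ⟨J, hJB, hJst, hJsum⟩ := exists_stabw G w' B
    rw [hJsum]
    by_cases hc : ∃ v ∈ J, v ∈ S
    · obtain ⟨v, hvJ, hvS⟩ := hc
      have hvonly : ∀ a ∈ J, a ∈ S → a = v := by
        intro a ha has
        by_contra hne
        exact hJst (Finset.mem_coe.2 ha) (Finset.mem_coe.2 hvJ) hne (hSclique has hvS hne)
      obtain ⟨K, hK, hKst, hKsum⟩ := exists_stabw G w (A \ insert v (G.neighborSet v))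
      have hKAS : (↑K : Set V) ⊆ A \ S := by
        intro k hk
        have hk' := hK hk
        refine ⟨hk'.1, ?_⟩
        intro hks
        apply hk'.2
        have hne : k ≠ v := by rintro rfl; exact hk'.2 (Set.mem_insert _ _)
        exact Set.mem_insert_iff.2 (Or.inr ((G.mem_neighborSet v k).2 (hSclique hvS hks hne.symm)))
      have hdisj : Disjoint K J := by
        rw [Finset.disjoint_left]
        intro k hkK hkJ
        have hkAS := hKAS (Finset.mem_coe.2 hkK)
        exact hkAS.2 (hABS k hkAS.1 (hJB (Finset.mem_coe.2 hkJ)))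
      have hcrossKJ : ∀ k ∈ (↑K : Set V), ∀ j ∈ (↑J : Set V), ¬ G.Adj k j := by
        intro k hk j hj
        by_cases hjv : j = v
        · subst hjv
          intro hadj
          exact (hK hk).2 (Set.mem_insert_iff.2 (Or.inr hadj.symm))
        · have hjS : j ∉ S := fun h => hjv (hvonly j (Finset.mem_coe.1 hj) h)
          exact hcross k (hKAS hk) j ⟨hJB hj, hjS⟩
      have hUst : (↑(K ∪ J) : Set V).Pairwise (fun a b => ¬ G.Adj a b) := by
        rw [Finset.coe_union]
        intro a ha b hb hne
        rcases ha with ha | ha <;> rcases hb with hb | hb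
        · exact hKst ha hb hne
        · exact hcrossKJ a ha b hb
        · intro hadj; exact hcrossKJ b hb a ha hadj.symm
        · exact hJst ha hb hne
      have hUsub : (↑(K ∪ J) : Set V) ⊆ Set.univ := Set.subset_univ _
      have hle : ∑ x ∈ K ∪ J, w x ≤ stabw G w Set.univ := le_stabw G w _ _ hUsub hUst
      rw [Finset.sum_union hdisj] at hle
      have hsumJ' : ∑ x ∈ J, w' x = w' v + ∑ x ∈ J.erase v, w x := by
        rw [← Finset.add_sum_erase _ w' hvJ]
        congr 1
        apply Finset.sum_congr rfl
        intro a ha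
        have ha' := Finset.mem_of_mem_erase ha
        have hane : a ≠ v := Finset.ne_of_mem_erase ha
        have has : a ∉ S := fun h => hane (hvonly a ha' h)
        exact hw'B a ⟨hJB (Finset.mem_coe.2 ha'), has⟩
      have hsumJ : ∑ x ∈ J, w x = w v + ∑ x ∈ J.erase v, w x := by
        rw [← Finset.add_sum_erase _ w hvJ]
      have hwv := hw'S v hvS
      rw [hwv] at hsumJ'
      linarith
    · push_neg at hc
      obtain ⟨K, hK, hKst, hKsum⟩ := exists_stabw G w (A \ S)
      have hJBS : (↑J : Set V) ⊆ B \ S := by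
        intro j hj
        exact ⟨hJB hj, hc j (Finset.mem_coe.1 hj)⟩
      have hdisj : Disjoint K J := by
        rw [Finset.disjoint_left]
        intro k hkK hkJ
        have hkAS := hK (Finset.mem_coe.2 hkK)
        exact hkAS.2 (hABS k hkAS.1 (hJB (Finset.mem_coe.2 hkJ)))
      have hUst : (↑(K ∪ J) : Set V).Pairwise (fun a b => ¬ G.Adj a b) := by
        rw [Finset.coe_union]
        intro a ha b hb hne
        rcases ha with ha | ha <;> rcases hb with hb | hb
        · exact hKst ha hb hne
        · exact hcross a (hK ha) b (hJBS hb)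
        · intro hadj; exact hcross b (hK hb) a (hJBS ha) hadj.symm
        · exact hJst ha hb hne
      have hle : ∑ x ∈ K ∪ J, w x ≤ stabw G w Set.univ :=
        le_stabw G w _ _ (Set.subset_univ _) hUst
      rw [Finset.sum_union hdisj] at hle
      have heq : ∑ x ∈ J, w' x = ∑ x ∈ J, w x := by
        apply Finset.sum_congr rfl
        intro a ha
        exact hw'B a (hJBS (Finset.mem_coe.2 ha))
      linarith
end
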